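/- arXiv:1904.01462 — 2 statements merged into one kernel-verified Lean document; each statement's English description precedes it below -/
import Mathlib

section
/- In Cl_4, for all real numbers μ₁₂, λ₁₂, μ₁₃ one has (μ₁₂ • (e₃*e₁*e₂) + λ₁₂ • (e₄*e₁*e₂) + μ₁₃ • (e₄*e₁*e₃))^2 = (μ₁₂² + λ₁₂² + μ₁₃²) • 1; consequently, if (μ₁₂, λ₁₂, μ₁₃) ≠ (0,0,0) then μ₁₂ • (e₃*e₁*e₂) + λ₁₂ • (e₄*e₁*e₂) + μ₁₃ • (e₄*e₁*e₃) is a unit of Cl_4. (This element is 4× the invariant Dirac operator of a metric on the 4-dimensional filiform nilpotent Lie algebra L₄ = (0,0,12,13); the identity 16 D̸² = (μ₁₂²+μ₁₃²+λ₁₂²)·Id proves that 4-dimensional non-abelian nilmanifolds have no left-invariant harmonic spinors.) -/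
open scoped BigOperators

/-- The negative-definite quadratic form `Q v = -∑ i, (v i)^2` on `EuclideanSpace ℝ (Fin n)`. -/
noncomputable def Q (n : ℕ) : QuadraticForm ℝ (EuclideanSpace ℝ (Fin n)) :=
  QuadraticMap.ofPolar (fun v => -∑ i, v i ^ 2)
    (fun a v => by
      simp only [PiLp.smul_apply, smul_eq_mul, mul_pow]
      rw [← Finset.mul_sum]
      ring)
    (fun x x' y => by
      have h : ∀ (u w : EuclideanSpace ℝ (Fin n)),
          QuadraticMap.polar (fun v : EuclideanSpace ℝ (Fin n) => -∑ i, v i ^ 2) u w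
            = -(2 * ∑ i, u i * w i) := by
        intro u w
        have hsq : ∀ i, (u i + w i) ^ 2 = u i ^ 2 + w i ^ 2 + 2 * (u i * w i) := fun i => by ring
        simp_rw [QuadraticMap.polar, PiLp.add_apply, hsq, Finset.sum_add_distrib,
          ← Finset.mul_sum]
        ring
      simp_rw [h, PiLp.add_apply, add_mul, Finset.sum_add_distrib]
      ring)
    (fun a x y => by
      have h : ∀ (u w : EuclideanSpace ℝ (Fin n)),
          QuadraticMap.polar (fun v : EuclideanSpace ℝ (Fin n) => -∑ i, v i ^ 2) u w
            = -(2 * ∑ i, u i * w i) := by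
        intro u w
        have hsq : ∀ i, (u i + w i) ^ 2 = u i ^ 2 + w i ^ 2 + 2 * (u i * w i) := fun i => by ring
        simp_rw [QuadraticMap.polar, PiLp.add_apply, hsq, Finset.sum_add_distrib,
          ← Finset.mul_sum]
        ring
      simp_rw [h, PiLp.smul_apply, smul_eq_mul, mul_assoc, ← Finset.mul_sum]
      ring)

/-- The image in the Clifford algebra `Cl_n` of the `i`-th standard basis vector. -/
noncomputable def e {n : ℕ} (i : Fin n) : CliffordAlgebra (Q n) :=
  CliffordAlgebra.ι (Q n) (EuclideanSpace.single i 1)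

/-! The blades `e₃e₁e₂`, `e₄e₁e₂`, `e₄e₁e₃` each square to `1` (a product of three distinct
anticommuting generators squaring to `-1`), and any two of them anticommute, since they share exactly
two generators. Hence the cross terms cancel in the square of the Dirac element, which is the scalar
`μ₁₂² + λ₁₂² + μ₁₃²`; when that scalar is nonzero, dividing the element by it gives its inverse. -/

section Generators

variable {n : ℕ}

lemma Q_apply (v : EuclideanSpace ℝ (Fin n)) : Q n v = -∑ i, v i ^ 2 := rfl

lemma e_mul_self (i : Fin n) : e i * e i = -1 := by
  simp [e, CliffordAlgebra.ι_sq_scalar, Q_apply]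

lemma e_mul_e_of_ne {i j : Fin n} (h : i ≠ j) : e i * e j = -(e j * e i) := by
  refine CliffordAlgebra.ι_mul_ι_comm_of_isOrtho ?_
  simp [QuadraticMap.isOrtho_def, Q_apply, PiLp.single_apply, add_sq, Finset.sum_add_distrib,
    h.symm]

lemma e_mul_e_of_lt {i j : Fin n} (h : i < j) : e j * e i = -(e i * e j) :=
  e_mul_e_of_ne h.ne'

lemma e_mul_e_mul_self (i : Fin n) (x : CliffordAlgebra (Q n)) : e i * (e i * x) = -x := by
  rw [← mul_assoc, e_mul_self, neg_one_mul]

lemma e_mul_e_mul_of_lt {i j : Fin n} (h : i < j) (x : CliffordAlgebra (Q n)) :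
    e j * (e i * x) = -(e i * (e j * x)) := by
  rw [← mul_assoc, e_mul_e_of_lt h, neg_mul, mul_assoc]

end Generators

theorem sq_smul_add_smul_add_smul {R A : Type*} [CommRing R] [Ring A] [Algebra R A] {a b c : A}
    (ha : a * a = 1) (hb : b * b = 1) (hc : c * c = 1)
    (hab : b * a = -(a * b)) (hac : c * a = -(a * c)) (hbc : c * b = -(b * c)) (x y z : R) :
    (x • a + y • b + z • c) ^ 2 = (x ^ 2 + y ^ 2 + z ^ 2) • (1 : A) := by
  simp only [sq, add_mul, mul_add, smul_mul_smul_comm, ha, hb, hc, hab, hac, hbc, smul_neg]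
  module

theorem isUnit_of_sq_eq_smul_one {K A : Type*} [Field K] [Ring A] [Algebra K A] {a : A} {r : K}
    (hr : r ≠ 0) (h : a ^ 2 = r • 1) : IsUnit a := by
  rw [← isUnit_pow_iff two_ne_zero, h, ← Algebra.algebraMap_eq_smul_one]
  exact hr.isUnit.map _

/-- **No invariant harmonic spinors on `L₄`.** In `Cl₄`, the element
`μ₁₂ • (e₃e₁e₂) + λ₁₂ • (e₄e₁e₂) + μ₁₃ • (e₄e₁e₃)` squares to `(μ₁₂²+λ₁₂²+μ₁₃²) • 1`;
hence it is a unit as soon as `(μ₁₂, λ₁₂, μ₁₃) ≠ (0,0,0)`. -/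
theorem clifford_L4_dirac_invertible (μ₁₂ lam₁₂ μ₁₃ : ℝ) :
    (μ₁₂ • (e (2 : Fin 4) * e 0 * e 1) + lam₁₂ • (e (3 : Fin 4) * e 0 * e 1)
        + μ₁₃ • (e (3 : Fin 4) * e 0 * e 2)) ^ 2
      = (μ₁₂ ^ 2 + lam₁₂ ^ 2 + μ₁₃ ^ 2) • (1 : CliffordAlgebra (Q 4))
    ∧ ((μ₁₂, lam₁₂, μ₁₃) ≠ ((0 : ℝ), (0 : ℝ), (0 : ℝ)) →
        IsUnit (μ₁₂ • (e (2 : Fin 4) * e 0 * e 1) + lam₁₂ • (e (3 : Fin 4) * e 0 * e 1)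
          + μ₁₃ • (e (3 : Fin 4) * e 0 * e 2))) := by
  have hsq := sq_smul_add_smul_add_smul (A := CliffordAlgebra (Q 4)) (a := e 2 * e 0 * e 1)
    (b := e 3 * e 0 * e 1) (c := e 3 * e 0 * e 2) ?_ ?_ ?_ ?_ ?_ ?_ μ₁₂ lam₁₂ μ₁₃
  · refine ⟨hsq, fun hne => isUnit_of_sq_eq_smul_one ?_ hsq⟩
    contrapose! hne
    simp only [Prod.mk.injEq]
    refine ⟨?_, ?_, ?_⟩ <;> nlinarith [sq_nonneg μ₁₂, sq_nonneg lam₁₂, sq_nonneg μ₁₃]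
  -- the six blade relations: sort each side's generators into increasing order
  all_goals simp (disch := decide) only [mul_assoc, e_mul_e_mul_self, e_mul_e_mul_of_lt,
    e_mul_self, e_mul_e_of_lt, mul_neg, neg_mul, neg_neg, mul_one]
end

section
/- In Cl_5, let μ₁₂, μ₁₄, μ₂₃ be nonzero real numbers and λ₁₂, λ₁₃ arbitrary real numbers, and set x = μ₁₂ • (e₄*e₁*e₂) + λ₁₂ • (e₅*e₁*e₂) + λ₁₃ • (e₅*e₁*e₃) + μ₁₄ • (e₅*e₁*e₄) + μ₂₃ • (e₅*e₂*e₃). Then x is NOT a unit of Cl_5 if and only if λ₁₂ = 0, λ₁₃ = 0 and μ₁₂² + μ₁₄² = μ₂₃². (x is 4× the invariant Dirac operator of a metric on the nilpotent Lie algebra 𝒩₅,₄ = (0,0,0,12,14+23); this is the 𝒩₅,₄ case of the paper's Theorem on left-invariant harmonic spinors on 5-dimensional nilmanifolds.) -/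
open scoped BigOperators

lemma Qval {n : ℕ} (v : EuclideanSpace ℝ (Fin n)) : Q n v = -∑ i, v i ^ 2 := rfl

lemma Qsingle {n : ℕ} (i : Fin n) : Q n (EuclideanSpace.single i 1) = -1 := by
  rw [Qval]
  have h : ∀ k, (EuclideanSpace.single i (1:ℝ)) k ^ 2 = if k = i then 1 else 0 := by
    intro k
    simp [EuclideanSpace.single_apply]
  simp [h]

lemma polar_single {n : ℕ} {i j : Fin n} (h : i ≠ j) :
    QuadraticMap.polar (⇑(Q n)) (EuclideanSpace.single i 1) (EuclideanSpace.single j 1) = 0 := by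
  rw [QuadraticMap.polar, Qval, Qval, Qval]
  have expand : ∀ k, ((EuclideanSpace.single i (1:ℝ) + EuclideanSpace.single j 1 : EuclideanSpace ℝ (Fin n)) k) ^ 2
      = (EuclideanSpace.single i (1:ℝ) k) ^ 2 + (EuclideanSpace.single j (1:ℝ) k) ^ 2
        + 2 * (EuclideanSpace.single i (1:ℝ) k * EuclideanSpace.single j (1:ℝ) k) := by
    intro k; rw [PiLp.add_apply]; ring
  have hz : ∀ k, EuclideanSpace.single i (1:ℝ) k * EuclideanSpace.single j (1:ℝ) k = 0 := by
    intro k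
    by_cases hk : k = i
    · subst hk; simp [EuclideanSpace.single_apply, h]
    · simp [EuclideanSpace.single_apply, hk]
  simp_rw [expand, Finset.sum_add_distrib, hz]
  simp

lemma e_sq {n : ℕ} (i : Fin n) : e i * e i = -1 := by
  rw [e, CliffordAlgebra.ι_sq_scalar, Qsingle, map_neg, map_one]

lemma e_anti {n : ℕ} {i j : Fin n} (h : i ≠ j) : e i * e j = -(e j * e i) := by
  have hp := CliffordAlgebra.ι_mul_ι_add_swap (Q := Q n)
    (EuclideanSpace.single i 1) (EuclideanSpace.single j 1)
  rw [polar_single h, map_zero] at hp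
  unfold e
  exact eq_neg_of_add_eq_zero_left hp

lemma e_sq' {n : ℕ} (i : Fin n) (z : CliffordAlgebra (Q n)) : e i * (e i * z) = -z := by
  rw [← mul_assoc, e_sq, neg_one_mul]

lemma e_anti' {n : ℕ} {i j : Fin n} (h : i ≠ j) (z : CliffordAlgebra (Q n)) :
    e i * (e j * z) = -(e j * (e i * z)) := by
  rw [← mul_assoc, e_anti h, neg_mul, mul_assoc]

lemma sw10 : e (1:Fin 5) * e 0 = -(e 0 * e 1) := e_anti (by decide)
lemma sw10' (z : CliffordAlgebra (Q 5)) : e (1:Fin 5) * (e 0 * z) = -(e 0 * (e 1 * z)) := e_anti' (by decide) z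
lemma sw20 : e (2:Fin 5) * e 0 = -(e 0 * e 2) := e_anti (by decide)
lemma sw20' (z : CliffordAlgebra (Q 5)) : e (2:Fin 5) * (e 0 * z) = -(e 0 * (e 2 * z)) := e_anti' (by decide) z
lemma sw21 : e (2:Fin 5) * e 1 = -(e 1 * e 2) := e_anti (by decide)
lemma sw21' (z : CliffordAlgebra (Q 5)) : e (2:Fin 5) * (e 1 * z) = -(e 1 * (e 2 * z)) := e_anti' (by decide) z
lemma sw30 : e (3:Fin 5) * e 0 = -(e 0 * e 3) := e_anti (by decide)
lemma sw30' (z : CliffordAlgebra (Q 5)) : e (3:Fin 5) * (e 0 * z) = -(e 0 * (e 3 * z)) := e_anti' (by decide) z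
lemma sw31 : e (3:Fin 5) * e 1 = -(e 1 * e 3) := e_anti (by decide)
lemma sw31' (z : CliffordAlgebra (Q 5)) : e (3:Fin 5) * (e 1 * z) = -(e 1 * (e 3 * z)) := e_anti' (by decide) z
lemma sw32 : e (3:Fin 5) * e 2 = -(e 2 * e 3) := e_anti (by decide)
lemma sw32' (z : CliffordAlgebra (Q 5)) : e (3:Fin 5) * (e 2 * z) = -(e 2 * (e 3 * z)) := e_anti' (by decide) z
lemma sw40 : e (4:Fin 5) * e 0 = -(e 0 * e 4) := e_anti (by decide)
lemma sw40' (z : CliffordAlgebra (Q 5)) : e (4:Fin 5) * (e 0 * z) = -(e 0 * (e 4 * z)) := e_anti' (by decide) z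
lemma sw41 : e (4:Fin 5) * e 1 = -(e 1 * e 4) := e_anti (by decide)
lemma sw41' (z : CliffordAlgebra (Q 5)) : e (4:Fin 5) * (e 1 * z) = -(e 1 * (e 4 * z)) := e_anti' (by decide) z
lemma sw42 : e (4:Fin 5) * e 2 = -(e 2 * e 4) := e_anti (by decide)
lemma sw42' (z : CliffordAlgebra (Q 5)) : e (4:Fin 5) * (e 2 * z) = -(e 2 * (e 4 * z)) := e_anti' (by decide) z
lemma sw43 : e (4:Fin 5) * e 3 = -(e 3 * e 4) := e_anti (by decide)
lemma sw43' (z : CliffordAlgebra (Q 5)) : e (4:Fin 5) * (e 3 * z) = -(e 3 * (e 4 * z)) := e_anti' (by decide) z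

noncomputable def g0 : Matrix (Fin 4) (Fin 4) ℂ :=
  !![0, 0, Complex.I, 0; 0, 0, 0, -Complex.I; Complex.I, 0, 0, 0; 0, -Complex.I, 0, 0]
noncomputable def g1 : Matrix (Fin 4) (Fin 4) ℂ :=
  !![0, 0, 0, 1; 0, 0, -1, 0; 0, 1, 0, 0; -1, 0, 0, 0]
noncomputable def g2 : Matrix (Fin 4) (Fin 4) ℂ :=
  !![0, 0, 0, Complex.I; 0, 0, Complex.I, 0; 0, Complex.I, 0, 0; Complex.I, 0, 0, 0]
noncomputable def g3 : Matrix (Fin 4) (Fin 4) ℂ :=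
  !![0, 0, 1, 0; 0, 0, 0, 1; -1, 0, 0, 0; 0, -1, 0, 0]
noncomputable def g4 : Matrix (Fin 4) (Fin 4) ℂ :=
  !![Complex.I, 0, 0, 0; 0, Complex.I, 0, 0; 0, 0, -Complex.I, 0; 0, 0, 0, -Complex.I]
noncomputable def G301 : Matrix (Fin 4) (Fin 4) ℂ :=
  !![0, 0, 0, Complex.I; 0, 0, Complex.I, 0; 0, -Complex.I, 0, 0; -Complex.I, 0, 0, 0]
noncomputable def G403 : Matrix (Fin 4) (Fin 4) ℂ :=
  !![1, 0, 0, 0; 0, -1, 0, 0; 0, 0, 1, 0; 0, 0, 0, -1]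
noncomputable def G412 : Matrix (Fin 4) (Fin 4) ℂ :=
  !![-1, 0, 0, 0; 0, 1, 0, 0; 0, 0, 1, 0; 0, 0, 0, -1]

set_option maxHeartbeats 1000000 in
lemma hG301 : g3 * g0 * g1 = G301 := by
  ext i j
  fin_cases i <;> fin_cases j <;>
    simp [g0, g1, g3, G301, Matrix.mul_apply, Fin.sum_univ_four, Matrix.vecHead, Matrix.vecTail]

set_option maxHeartbeats 1000000 in
lemma hG403 : g4 * g0 * g3 = G403 := by
  ext i j
  fin_cases i <;> fin_cases j <;>
    simp [g0, g3, g4, G403, Matrix.mul_apply, Fin.sum_univ_four, Matrix.vecHead, Matrix.vecTail, Complex.I_mul_I]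

set_option maxHeartbeats 1000000 in
lemma hG412 : g4 * g1 * g2 = G412 := by
  ext i j
  fin_cases i <;> fin_cases j <;>
    simp [g1, g2, g4, G412, Matrix.mul_apply, Fin.sum_univ_four, Matrix.vecHead, Matrix.vecTail, Complex.I_mul_I]

noncomputable def fL : EuclideanSpace ℝ (Fin 5) →ₗ[ℝ] Matrix (Fin 4) (Fin 4) ℂ where
  toFun v := v 0 • g0 + v 1 • g1 + v 2 • g2 + v 3 • g3 + v 4 • g4
  map_add' u w := by
    simp only [PiLp.add_apply, add_smul]
    module
  map_smul' a v := by
    simp only [PiLp.smul_apply, smul_eq_mul, RingHom.id_apply, mul_smul]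
    module

lemma fL_apply (v : EuclideanSpace ℝ (Fin 5)) :
    fL v = v 0 • g0 + v 1 • g1 + v 2 • g2 + v 3 • g3 + v 4 • g4 := rfl

set_option maxHeartbeats 1000000 in
set_option maxHeartbeats 1000000 in
lemma hfL (v : EuclideanSpace ℝ (Fin 5)) :
    fL v * fL v = algebraMap ℝ (Matrix (Fin 4) (Fin 4) ℂ) (Q 5 v) := by
  have hQ : Q 5 v = -(v 0^2 + v 1^2 + v 2^2 + v 3^2 + v 4^2) := by
    rw [Qval, Fin.sum_univ_five]
  rw [hQ, fL_apply]
  ext i j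
  fin_cases i <;> fin_cases j <;>
    · simp [g0, g1, g2, g3, g4, Matrix.mul_apply, Fin.sum_univ_four,
        Matrix.algebraMap_matrix_apply, Complex.real_smul]
      push_cast
      try ring_nf
      try simp [Complex.I_sq]
      try ring_nf

noncomputable def φ : CliffordAlgebra (Q 5) →ₐ[ℝ] Matrix (Fin 4) (Fin 4) ℂ :=
  CliffordAlgebra.lift (Q 5) ⟨fL, hfL⟩

lemma φ_e (i : Fin 5) : φ (e i) = fL (EuclideanSpace.single i 1) := by
  rw [e, φ, CliffordAlgebra.lift_ι_apply]

lemma φ_e0 : φ (e 0) = g0 := by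
  rw [φ_e, fL_apply]; simp [EuclideanSpace.single_apply]
lemma φ_e1 : φ (e 1) = g1 := by
  rw [φ_e, fL_apply]; simp [EuclideanSpace.single_apply]
lemma φ_e2 : φ (e 2) = g2 := by
  rw [φ_e, fL_apply]; simp [EuclideanSpace.single_apply]
lemma φ_e3 : φ (e 3) = g3 := by
  rw [φ_e, fL_apply]; simp [EuclideanSpace.single_apply]
lemma φ_e4 : φ (e 4) = g4 := by
  rw [φ_e, fL_apply]; simp [EuclideanSpace.single_apply]


lemma scalar_case (μ₁₂ μ₁₄ μ₂₃ lam₁₂ lam₁₃ : ℝ)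
    (hμ₁₂ : μ₁₂ ≠ 0) (hμ₁₄ : μ₁₄ ≠ 0) (hμ₂₃ : μ₂₃ ≠ 0)
    (h : (μ₁₂^2+lam₁₂^2+lam₁₃^2+μ₁₄^2+μ₂₃^2)^2 = 4*(μ₁₂^2*lam₁₃^2 + μ₁₂^2*μ₂₃^2 + μ₁₄^2*μ₂₃^2)) :
    lam₁₂ = 0 ∧ lam₁₃ = 0 ∧ μ₁₂^2 + μ₁₄^2 = μ₂₃^2 := by
  have hA : 0 < μ₁₂^2 := by positivity
  have hD : 0 < μ₁₄^2 := by positivity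
  have hF : 0 < μ₂₃^2 := by positivity
  have hB : 0 ≤ lam₁₂^2 := sq_nonneg _
  have hC : 0 ≤ lam₁₃^2 := sq_nonneg _
  rcases le_or_gt (μ₁₂^2) (μ₂₃^2) with hle | hlt
  · have key : (μ₁₂^2+lam₁₂^2+lam₁₃^2+μ₁₄^2-μ₂₃^2)^2 + 4*μ₂₃^2*lam₁₂^2 + (4*lam₁₃^2)*(μ₂₃^2-μ₁₂^2) = 0 := by
      linear_combination h
    have t1 : 0 ≤ (μ₁₂^2+lam₁₂^2+lam₁₃^2+μ₁₄^2-μ₂₃^2)^2 := sq_nonneg _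
    have t2 : 0 ≤ 4*μ₂₃^2*lam₁₂^2 := by positivity
    have t3 : 0 ≤ (4*lam₁₃^2)*(μ₂₃^2-μ₁₂^2) :=
      mul_nonneg (by positivity) (sub_nonneg.2 hle)
    have eB : μ₂₃^2*lam₁₂^2 = 0 := by linarith
    have hB0 : lam₁₂ = 0 := by
      rcases mul_eq_zero.1 eB with h' | h'
      · exact absurd h' hF.ne'
      · exact pow_eq_zero_iff (by norm_num) |>.1 h'
    have esq : (μ₁₂^2+lam₁₂^2+lam₁₃^2+μ₁₄^2-μ₂₃^2)^2 = 0 := by linarith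
    have esq' : μ₁₂^2+lam₁₂^2+lam₁₃^2+μ₁₄^2-μ₂₃^2 = 0 := pow_eq_zero_iff (by norm_num) |>.1 esq
    have eC : (4*lam₁₃^2)*(μ₂₃^2-μ₁₂^2) = 0 := by linarith
    rcases mul_eq_zero.1 eC with h' | h'
    · have hC0 : lam₁₃ = 0 := by
        have : lam₁₃^2 = 0 := by linarith
        exact pow_eq_zero_iff (by norm_num) |>.1 this
      refine ⟨hB0, hC0, ?_⟩
      rw [hB0, hC0] at esq'
      nlinarith [esq']
    · exfalso
      have hFA : μ₂₃^2 = μ₁₂^2 := by linarith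
      rw [hB0] at esq'
      nlinarith [esq', hC, hD, hFA]
  · exfalso
    have key2 : (lam₁₂^2+lam₁₃^2+μ₁₄^2+μ₂₃^2-μ₁₂^2)^2 + 4*μ₂₃^2*lam₁₂^2 + (4*(μ₁₂^2-μ₂₃^2))*(lam₁₂^2+μ₁₄^2) = 0 := by
      linear_combination h
    have p1 : 0 ≤ (lam₁₂^2+lam₁₃^2+μ₁₄^2+μ₂₃^2-μ₁₂^2)^2 := sq_nonneg _
    have p2 : 0 ≤ 4*μ₂₃^2*lam₁₂^2 := by positivity
    have p3 : 0 < (4*(μ₁₂^2-μ₂₃^2))*(lam₁₂^2+μ₁₄^2) := by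
      apply mul_pos (by linarith)
      positivity
    linarith

set_option maxHeartbeats 1000000 in
/-- **The `𝒩₅,₄` case.** In `Cl₅`, with `μ₁₂, μ₁₄, μ₂₃ ≠ 0`, the element
`x = μ₁₂ • (e₄e₁e₂) + λ₁₂ • (e₅e₁e₂) + λ₁₃ • (e₅e₁e₃) + μ₁₄ • (e₅e₁e₄) + μ₂₃ • (e₅e₂e₃)`
fails to be a unit iff `λ₁₂ = 0`, `λ₁₃ = 0` and `μ₁₂² + μ₁₄² = μ₂₃²`. -/
theorem clifford_N54_dirac (μ₁₂ μ₁₄ μ₂₃ lam₁₂ lam₁₃ : ℝ)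
    (hμ₁₂ : μ₁₂ ≠ 0) (hμ₁₄ : μ₁₄ ≠ 0) (hμ₂₃ : μ₂₃ ≠ 0)
    (x : CliffordAlgebra (Q 5))
    (hx : x = μ₁₂ • (e (3 : Fin 5) * e 0 * e 1) + lam₁₂ • (e (4 : Fin 5) * e 0 * e 1)
        + lam₁₃ • (e (4 : Fin 5) * e 0 * e 2) + μ₁₄ • (e (4 : Fin 5) * e 0 * e 3)
        + μ₂₃ • (e (4 : Fin 5) * e 1 * e 2)) :
    ¬ IsUnit x ↔ (lam₁₂ = 0 ∧ lam₁₃ = 0 ∧ μ₁₂ ^ 2 + μ₁₄ ^ 2 = μ₂₃ ^ 2) := by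
  constructor
  · intro hnu
    by_contra hcond
    apply hnu
    have L1 : x * x = (μ₁₂^2 + lam₁₂^2 + lam₁₃^2 + μ₁₄^2 + μ₂₃^2) • (1 : CliffordAlgebra (Q 5))
        + (2*(μ₁₂*lam₁₃)) • (e (1:Fin 5) * (e 2 * (e 3 * e 4)))
        - (2*(μ₁₂*μ₂₃)) • (e (0:Fin 5) * (e 2 * (e 3 * e 4)))
        - (2*(μ₁₄*μ₂₃)) • (e (0:Fin 5) * (e 1 * (e 2 * e 3))) := by
      rw [hx]
      simp only [add_mul, mul_add, smul_mul_assoc, mul_smul_comm, smul_smul, mul_assoc,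
        e_sq, e_sq', sw10, sw20, sw21, sw30, sw31, sw32, sw40, sw41, sw42, sw43,
      sw10', sw20', sw21', sw30', sw31', sw32', sw40', sw41', sw42', sw43',
      mul_neg, neg_mul, smul_neg, neg_neg, mul_one, one_mul]
      module
    have hK : x * ((2*(μ₁₂^2 + lam₁₂^2 + lam₁₃^2 + μ₁₄^2 + μ₂₃^2)) • x - x*x*x)
        = ((μ₁₂^2 + lam₁₂^2 + lam₁₃^2 + μ₁₄^2 + μ₂₃^2)^2 - (4*(μ₁₂^2*lam₁₃^2 + μ₁₂^2*μ₂₃^2 + μ₁₄^2*μ₂₃^2))) • (1 : CliffordAlgebra (Q 5)) := by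
      have hx4 : x * (x*x*x) = (x*x) * (x*x) := by noncomm_ring
      rw [mul_sub, mul_smul_comm, hx4, L1]
      simp only [add_mul, mul_add, sub_mul, mul_sub, smul_mul_assoc, mul_smul_comm, smul_smul,
        mul_assoc, e_sq, e_sq', sw10, sw20, sw21, sw30, sw31, sw32, sw40, sw41, sw42, sw43,
      sw10', sw20', sw21', sw30', sw31', sw32', sw40', sw41', sw42', sw43',
      mul_neg, neg_mul, smul_neg, neg_neg, mul_one, one_mul]
      module
    have hK' : ((2*(μ₁₂^2 + lam₁₂^2 + lam₁₃^2 + μ₁₄^2 + μ₂₃^2)) • x - x*x*x) * x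
        = ((μ₁₂^2 + lam₁₂^2 + lam₁₃^2 + μ₁₄^2 + μ₂₃^2)^2 - (4*(μ₁₂^2*lam₁₃^2 + μ₁₂^2*μ₂₃^2 + μ₁₄^2*μ₂₃^2))) • (1 : CliffordAlgebra (Q 5)) := by
      have hx4 : (x*x*x) * x = (x*x) * (x*x) := by noncomm_ring
      rw [sub_mul, smul_mul_assoc, hx4, L1]
      simp only [add_mul, mul_add, sub_mul, mul_sub, smul_mul_assoc, mul_smul_comm, smul_smul,
        mul_assoc, e_sq, e_sq', sw10, sw20, sw21, sw30, sw31, sw32, sw40, sw41, sw42, sw43,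
      sw10', sw20', sw21', sw30', sw31', sw32', sw40', sw41', sw42', sw43',
      mul_neg, neg_mul, smul_neg, neg_neg, mul_one, one_mul]
      module
    have hcne : (μ₁₂^2 + lam₁₂^2 + lam₁₃^2 + μ₁₄^2 + μ₂₃^2)^2 - (4*(μ₁₂^2*lam₁₃^2 + μ₁₂^2*μ₂₃^2 + μ₁₄^2*μ₂₃^2)) ≠ 0 := by
      intro h0
      exact hcond (scalar_case μ₁₂ μ₁₄ μ₂₃ lam₁₂ lam₁₃ hμ₁₂ hμ₁₄ hμ₂₃ (by linarith))
    exact isUnit_iff_exists.2 ⟨((μ₁₂^2 + lam₁₂^2 + lam₁₃^2 + μ₁₄^2 + μ₂₃^2)^2 - (4*(μ₁₂^2*lam₁₃^2 + μ₁₂^2*μ₂₃^2 + μ₁₄^2*μ₂₃^2)))⁻¹ • ((2*(μ₁₂^2 + lam₁₂^2 + lam₁₃^2 + μ₁₄^2 + μ₂₃^2)) • x - x*x*x),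
      by rw [mul_smul_comm, hK, smul_smul, inv_mul_cancel₀ hcne, one_smul],
      by rw [smul_mul_assoc, hK', smul_smul, inv_mul_cancel₀ hcne, one_smul]⟩
  · rintro ⟨h1, h2, h3⟩ hu
    have hφx : φ x = μ₁₂ • G301 + μ₁₄ • G403 + μ₂₃ • G412 := by
      rw [hx, h1, h2]
      simp only [zero_smul, add_zero, zero_add, map_add, map_smul, map_mul,
        φ_e0, φ_e1, φ_e2, φ_e3, φ_e4]
      rw [hG301, hG403, hG412]
    have hc : (μ₁₂:ℂ)^2 + (μ₁₄:ℂ)^2 = (μ₂₃:ℂ)^2 := by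
      exact_mod_cast congrArg Complex.ofReal h3
    have hux := hu.map φ
    rw [hφx, Matrix.isUnit_iff_isUnit_det, isUnit_iff_ne_zero] at hux
    apply hux
    rw [← Matrix.exists_mulVec_eq_zero_iff]
    refine ⟨![Complex.I * μ₁₂, 0, 0, (μ₂₃:ℂ) - μ₁₄], ?_, ?_⟩
    · intro h
      have h0 := congrFun h 0
      simp [Complex.ext_iff] at h0
      exact hμ₁₂ h0
    · funext i
      fin_cases i <;>
        · simp [G301, G403, G412, Matrix.mulVec, dotProduct, Fin.sum_univ_four,
            Matrix.vecHead, Matrix.vecTail, Complex.real_smul]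
          try ring_nf
          try simp [Complex.I_sq]
          try linear_combination hc
end
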